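/- For integers n, m ≥ 2, the shuffle product of single zeta values can be written as ζ(n)·ζ(m) = ∑_{j=1}^{n+m-1} [C(j-1, n-1) + C(j-1, m-1)] · ζ₂(n+m-j, j), where all binomial terms with j=1 vanish and the identity holds with convergent double zeta values. -/

import Mathlib

/-- The Euler–Zagier double zeta value
`ζ₂(a,b) = ∑_{0<n₁<n₂} n₁^{-a} n₂^{-b}` for natural number arguments. -/
noncomputable def zeta2 (a b : ℕ) : ℂ :=
  ∑' p : ℕ × ℕ, 1 / (((p.1 + 1 : ℕ) : ℂ) ^ a * ((p.1 + p.2 + 2 : ℕ) : ℂ) ^ b)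

open Finset in
private lemma pf_base (x y : ℂ) (hx : x ≠ 0) (hy : y ≠ 0) (hxy : x + y ≠ 0) (n : ℕ) :
    1 / (x ^ (n+1) * y) = ∑ i ∈ range (n+1),
      ((i.choose n : ℂ) / (y ^ (n+1-i) * (x+y) ^ (i+1))
        + 1 / (x ^ (n+1-i) * (x+y) ^ (i+1))) := by
  induction n with
  | zero =>
    rw [Finset.range_one, Finset.sum_singleton]
    norm_num
    field_simp
  | succ n ih =>
    rw [Finset.sum_range_succ']
    have key : ∀ i ∈ range (n+1),
        (((i+1).choose (n+1) : ℂ) / (y ^ (n+1+1-(i+1)) * (x+y) ^ (i+1+1))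
          + 1 / (x ^ (n+1+1-(i+1)) * (x+y) ^ (i+1+1)))
        = ((i.choose n : ℂ) / (y ^ (n+1-i) * (x+y) ^ (i+1))
            + 1 / (x ^ (n+1-i) * (x+y) ^ (i+1))) * (x+y)⁻¹ := by
      intro i hi
      rw [Finset.mem_range] at hi
      rw [Nat.choose_succ_succ, Nat.choose_eq_zero_of_lt hi, Nat.add_zero]
      have e1 : n+1+1-(i+1) = n+1-i := by omega
      rw [e1]
      have hyp : y ^ (n+1-i) ≠ 0 := pow_ne_zero _ hy
      have hxp : x ^ (n+1-i) ≠ 0 := pow_ne_zero _ hx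
      have hwp : (x+y) ^ (i+1) ≠ 0 := pow_ne_zero _ hxy
      rw [pow_succ]
      field_simp
    rw [Finset.sum_congr rfl key, ← Finset.sum_mul, ← ih]
    have hxp : x ^ (n+1) ≠ 0 := pow_ne_zero _ hx
    have hxp2 : x ^ (n+2) ≠ 0 := pow_ne_zero _ hx
    simp only [Nat.choose_eq_zero_of_lt (Nat.succ_pos n), Nat.cast_zero, zero_div, zero_add,
      Nat.sub_zero, pow_one]
    field_simp
    ring

open Finset in
private lemma pf_aux (x y : ℂ) (hx : x ≠ 0) (hy : y ≠ 0) (hxy : x + y ≠ 0) :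
    ∀ m n : ℕ, 1 / (x ^ (n+1) * y ^ (m+1))
      = ∑ i ∈ range (n+m+1),
          ((i.choose n : ℂ) / (y ^ (n+m+1-i) * (x+y) ^ (i+1))
            + (i.choose m : ℂ) / (x ^ (n+m+1-i) * (x+y) ^ (i+1))) := by
  intro m
  induction m with
  | zero =>
    intro n
    simpa using pf_base x y hx hy hxy n
  | succ m ihm =>
    intro n
    induction n with
    | zero =>
      have h := pf_base y x hy hx (by rw [add_comm]; exact hxy) (m+1)
      simp only [zero_add, Nat.choose_zero_right, Nat.cast_one]
      rw [show x ^ 1 * y ^ (m+1+1) = y ^ (m+1+1) * x by ring, h]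
      exact Finset.sum_congr rfl fun i _ => by rw [add_comm y x, add_comm]
    | succ n ihn =>
      have hE : n+1+(m+1)+1 = n+m+3 := by omega
      rw [hE, Finset.sum_range_succ']
      have key : ∀ i ∈ range (n+m+2),
          (((i+1).choose (n+1) : ℂ) / (y ^ (n+m+3-(i+1)) * (x+y) ^ (i+1+1))
            + ((i+1).choose (m+1) : ℂ) / (x ^ (n+m+3-(i+1)) * (x+y) ^ (i+1+1)))
          = (((i.choose n : ℂ) / (y ^ (n+m+2-i) * (x+y) ^ (i+1))
              + (i.choose (m+1) : ℂ) / (x ^ (n+m+2-i) * (x+y) ^ (i+1)))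
            + ((i.choose (n+1) : ℂ) / (y ^ (n+m+2-i) * (x+y) ^ (i+1))
              + (i.choose m : ℂ) / (x ^ (n+m+2-i) * (x+y) ^ (i+1)))) * (x+y)⁻¹ := by
        intro i hi
        have e1 : n+m+3-(i+1) = n+m+2-i := by omega
        rw [e1, Nat.choose_succ_succ i n, Nat.choose_succ_succ i m]
        have hyp : y ^ (n+m+2-i) ≠ 0 := pow_ne_zero _ hy
        have hxp : x ^ (n+m+2-i) ≠ 0 := pow_ne_zero _ hx
        have hwp : (x+y) ^ (i+1) ≠ 0 := pow_ne_zero _ hxy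
        push_cast
        rw [pow_succ]
        field_simp
        ring
      rw [Finset.sum_congr rfl key, ← Finset.sum_mul, Finset.sum_add_distrib]
      have h1 := ihn
      have e2 : n+(m+1)+1 = n+m+2 := by omega
      rw [e2] at h1
      have h2 := ihm (n+1)
      have e3 : n+1+m+1 = n+m+2 := by omega
      rw [e3] at h2
      rw [← h1, ← h2]
      have hx1 : x ^ (n+1) ≠ 0 := pow_ne_zero _ hx
      have hx2 : x ^ (n+1+1) ≠ 0 := pow_ne_zero _ hx
      have hy1 : y ^ (m+1) ≠ 0 := pow_ne_zero _ hy
      have hy2 : y ^ (m+1+1) ≠ 0 := pow_ne_zero _ hy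
      simp only [Nat.choose_eq_zero_of_lt (Nat.succ_pos n),
        Nat.choose_eq_zero_of_lt (Nat.succ_pos m), Nat.cast_zero, zero_div, zero_add, add_zero]
      field_simp
      ring

private noncomputable def gg (k : ℕ) : ℝ := 1 / (((k:ℝ)+1) * Real.sqrt ((k:ℝ)+1))

private lemma gg_nonneg (k : ℕ) : 0 ≤ gg k := by unfold gg; positivity

private lemma gg_summable : Summable gg := by
  have h : Summable (fun k : ℕ => 1 / ((k:ℝ)) ^ (3/2 : ℝ)) :=
    Real.summable_one_div_nat_rpow.mpr (by norm_num)
  have h2 := (_root_.summable_nat_add_iff 1).mpr h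
  refine h2.congr fun k => ?_
  unfold gg
  push_cast
  rw [show (3/2:ℝ) = 1 + 1/2 by norm_num, Real.rpow_add (by positivity), Real.rpow_one,
    ← Real.sqrt_eq_rpow]

private lemma denom_bound {u v : ℝ} (hu : 1 ≤ u) (hv : 1 ≤ v) {k j : ℕ} (hk : 1 ≤ k)
    (hj : 2 ≤ j) : u * Real.sqrt u * (v * Real.sqrt v) ≤ u ^ k * (u+v) ^ j := by
  have hu0 : (0:ℝ) ≤ u := by linarith
  have hv0 : (0:ℝ) ≤ v := by linarith
  have hsu := Real.sq_sqrt hu0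
  have hsv := Real.sq_sqrt hv0
  have h1u : 1 ≤ Real.sqrt u := by
    rw [show (1:ℝ) = Real.sqrt 1 by simp]; exact Real.sqrt_le_sqrt hu
  have h1v : 1 ≤ Real.sqrt v := by
    rw [show (1:ℝ) = Real.sqrt 1 by simp]; exact Real.sqrt_le_sqrt hv
  have step1 : Real.sqrt u * Real.sqrt v ≤ u + v := by
    nlinarith [sq_nonneg (Real.sqrt u - Real.sqrt v)]
  have hA : Real.sqrt u * Real.sqrt v * v ≤ (u+v)*(u+v) :=
    mul_le_mul step1 (by linarith) hv0 (by positivity)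
  have hB : u * Real.sqrt u * (v * Real.sqrt v) ≤ u * (u+v)^2 := by
    calc u * Real.sqrt u * (v * Real.sqrt v) = u * (Real.sqrt u * Real.sqrt v * v) := by ring
    _ ≤ u * ((u+v)*(u+v)) := by exact mul_le_mul_of_nonneg_left hA hu0
    _ = u * (u+v)^2 := by ring
  refine hB.trans (mul_le_mul (le_self_pow₀ hu (by omega)) (pow_le_pow_right₀ (by linarith) hj)
    (by positivity) (by positivity))

private lemma master_summable : Summable (fun p : ℕ × ℕ => gg p.1 * gg p.2) :=
  gg_summable.mul_of_nonneg gg_summable gg_nonneg gg_nonneg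

private lemma norm_term (A B : ℕ) (k j : ℕ) :
    ‖1 / (((A:ℕ):ℂ) ^ k * ((B:ℕ):ℂ) ^ j)‖ = 1 / (((A:ℝ)) ^ k * ((B:ℝ)) ^ j) := by
  simp [norm_div, norm_mul, norm_pow, Complex.norm_natCast]

private lemma summable_T {k j : ℕ} (hk : 1 ≤ k) (hj : 2 ≤ j) :
    Summable (fun p : ℕ × ℕ => 1 / (((p.1+1:ℕ):ℂ) ^ k * ((p.1+p.2+2:ℕ):ℂ) ^ j)) := by
  apply Summable.of_norm
  refine Summable.of_nonneg_of_le (fun p => norm_nonneg _) (fun p => ?_) master_summable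
  rw [norm_term]
  unfold gg
  rw [div_mul_div_comm, one_mul]
  have key := denom_bound (u := (p.1:ℝ)+1) (v := (p.2:ℝ)+1)
    (by norm_num) (by norm_num) hk hj
  refine one_div_le_one_div_of_le (by positivity) ?_
  push_cast
  convert key using 2
  · rfl
  · ring

private lemma summable_T' {k j : ℕ} (hk : 1 ≤ k) (hj : 2 ≤ j) :
    Summable (fun p : ℕ × ℕ => 1 / (((p.2+1:ℕ):ℂ) ^ k * ((p.1+p.2+2:ℕ):ℂ) ^ j)) := by
  apply Summable.of_norm
  refine Summable.of_nonneg_of_le (fun p => norm_nonneg _) (fun p => ?_) master_summable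
  rw [norm_term]
  unfold gg
  rw [div_mul_div_comm, one_mul]
  have key := denom_bound (u := (p.2:ℝ)+1) (v := (p.1:ℝ)+1)
    (by norm_num) (by norm_num) hk hj
  refine one_div_le_one_div_of_le (by positivity) ?_
  calc ((p.1:ℝ)+1) * Real.sqrt ((p.1:ℝ)+1) * (((p.2:ℝ)+1) * Real.sqrt ((p.2:ℝ)+1))
      = ((p.2:ℝ)+1) * Real.sqrt ((p.2:ℝ)+1) * (((p.1:ℝ)+1) * Real.sqrt ((p.1:ℝ)+1)) := by ring
    _ ≤ ((p.2:ℝ)+1) ^ k * (((p.2:ℝ)+1) + ((p.1:ℝ)+1)) ^ j := key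
    _ = (((p.2+1:ℕ)):ℝ) ^ k * (((p.1+p.2+2:ℕ)):ℝ) ^ j := by push_cast; ring

private lemma summable_cT2 (c : ℕ) {k j : ℕ} (h : c ≠ 0 → 1 ≤ k ∧ 2 ≤ j) :
    Summable (fun p : ℕ × ℕ => (c:ℂ) / (((p.1+1:ℕ):ℂ) ^ k * ((p.1+p.2+2:ℕ):ℂ) ^ j)) := by
  rcases eq_or_ne c 0 with rfl | hc
  · simpa using summable_zero
  · obtain ⟨hk, hj⟩ := h hc
    exact ((summable_T hk hj).mul_left (c:ℂ)).congr fun p => (mul_one_div _ _)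

private lemma summable_cT1 (c : ℕ) {k j : ℕ} (h : c ≠ 0 → 1 ≤ k ∧ 2 ≤ j) :
    Summable (fun p : ℕ × ℕ => (c:ℂ) / (((p.2+1:ℕ):ℂ) ^ k * ((p.1+p.2+2:ℕ):ℂ) ^ j)) := by
  rcases eq_or_ne c 0 with rfl | hc
  · simpa using summable_zero
  · obtain ⟨hk, hj⟩ := h hc
    exact ((summable_T' hk hj).mul_left (c:ℂ)).congr fun p => (mul_one_div _ _)

private lemma zeta_tsum {p : ℕ} (hp : 2 ≤ p) :
    riemannZeta p = ∑' k : ℕ, 1 / (((k+1:ℕ)) : ℂ) ^ p := by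
  rw [zeta_nat_eq_tsum_of_gt_one (by omega : 1 < p)]
  have hs : Summable (fun n : ℕ => 1 / (n:ℂ)^p) := by
    apply Summable.of_norm
    refine ((Real.summable_one_div_nat_pow (p := p)).mpr (by omega)).congr fun k => ?_
    rw [norm_div, norm_one, norm_pow, Complex.norm_natCast]
  rw [Summable.tsum_eq_zero_add hs]
  norm_num [zero_pow (by omega : p ≠ 0)]

private lemma summable_norm_one_div {p : ℕ} (hp : 2 ≤ p) :
    Summable (fun k : ℕ => ‖1 / (((k+1:ℕ)) : ℂ) ^ p‖) := by
  have h : Summable (fun n : ℕ => 1 / ((n:ℝ)) ^ p) :=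
    Real.summable_one_div_nat_pow.mpr (by omega)
  refine ((_root_.summable_nat_add_iff 1).mpr h).congr fun k => ?_
  rw [norm_div, norm_one, norm_pow, Complex.norm_natCast]

private lemma tsum_T1_eq (k j : ℕ) :
    ∑' z : ℕ × ℕ, 1 / (((z.2+1:ℕ):ℂ) ^ k * ((z.1+z.2+2:ℕ):ℂ) ^ j) = zeta2 k j := by
  rw [zeta2]
  calc ∑' z : ℕ × ℕ, 1 / (((z.2+1:ℕ):ℂ) ^ k * ((z.1+z.2+2:ℕ):ℂ) ^ j)
      = ∑' z : ℕ × ℕ,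
          (fun p : ℕ × ℕ => 1 / (((p.1+1:ℕ):ℂ) ^ k * ((p.1+p.2+2:ℕ):ℂ) ^ j))
            ((Equiv.prodComm ℕ ℕ) z) := by
        refine tsum_congr fun z => ?_
        simp only [Equiv.prodComm_apply, Prod.fst_swap, Prod.snd_swap]
        rw [show z.2 + z.1 = z.1 + z.2 from Nat.add_comm _ _]
    _ = _ := (Equiv.prodComm ℕ ℕ).tsum_eq
          (fun p : ℕ × ℕ => 1 / (((p.1+1:ℕ):ℂ) ^ k * ((p.1+p.2+2:ℕ):ℂ) ^ j))

/-- Shuffle product formula for depth-1 zeta values: for `n, m ≥ 2`,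
`ζ(n)ζ(m) = ∑_{j=1}^{n+m-1} [C(j-1,n-1) + C(j-1,m-1)] ζ₂(n+m-j, j)`. -/
theorem zeta_mul_zeta_shuffle (n m : ℕ) (hn : 2 ≤ n) (hm : 2 ≤ m) :
    riemannZeta n * riemannZeta m
      = ∑ j ∈ Finset.Icc 1 (n + m - 1),
          (((j - 1).choose (n - 1) + (j - 1).choose (m - 1) : ℕ) : ℂ)
            * zeta2 (n + m - j) j := by
  obtain ⟨a, rfl⟩ : ∃ a, n = a + 2 := ⟨n - 2, by omega⟩
  obtain ⟨b, rfl⟩ : ∃ b, m = b + 2 := ⟨m - 2, by omega⟩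
  clear hn hm
  have e4 : a + 2 + (b + 2) = a + b + 4 := by omega
  have e1 : a + b + 4 - 1 = a + b + 3 := by omega
  have e2 : a + 2 - 1 = a + 1 := by omega
  have e3 : b + 2 - 1 = b + 1 := by omega
  rw [e4, e1, e2, e3, ← Finset.Ico_add_one_right_eq_Icc, Finset.sum_Ico_eq_sum_range]
  have e5 : a + b + 3 + 1 - 1 = a + b + 3 := by omega
  rw [e5]
  rw [zeta_tsum (show 2 ≤ a+2 by omega), zeta_tsum (show 2 ≤ b+2 by omega),
    tsum_mul_tsum_of_summable_norm (summable_norm_one_div (by omega))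
      (summable_norm_one_div (by omega))]
  have point : ∀ z : ℕ × ℕ,
      (1 / (((z.1+1:ℕ)) : ℂ) ^ (a+2)) * (1 / (((z.2+1:ℕ)) : ℂ) ^ (b+2))
        = ∑ i ∈ Finset.range (a+b+3),
            ((i.choose (a+1) : ℂ) / ((((z.2+1:ℕ)) : ℂ) ^ (a+b+3-i)
                * (((z.1+z.2+2:ℕ)) : ℂ) ^ (i+1))
              + (i.choose (b+1) : ℂ) / ((((z.1+1:ℕ)) : ℂ) ^ (a+b+3-i)
                * (((z.1+z.2+2:ℕ)) : ℂ) ^ (i+1))) := by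
    intro z
    have hx : (((z.1+1:ℕ)) : ℂ) ≠ 0 := Nat.cast_ne_zero.mpr (by omega)
    have hy : (((z.2+1:ℕ)) : ℂ) ≠ 0 := Nat.cast_ne_zero.mpr (by omega)
    have hxy : (((z.1+1:ℕ)) : ℂ) + (((z.2+1:ℕ)) : ℂ) = (((z.1+z.2+2:ℕ)) : ℂ) := by
      push_cast; ring
    have hxy0 : (((z.1+1:ℕ)) : ℂ) + (((z.2+1:ℕ)) : ℂ) ≠ 0 := by
      rw [hxy]; exact Nat.cast_ne_zero.mpr (by omega)
    have h := pf_aux _ _ hx hy hxy0 (b+1) (a+1)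
    rw [div_mul_div_comm, one_mul]
    have ea : a + 1 + 1 = a + 2 := by omega
    have eb : b + 1 + 1 = b + 2 := by omega
    have ec : a + 1 + (b+1) + 1 = a + b + 3 := by omega
    rw [ea, eb, ec, hxy] at h
    exact h
  rw [tsum_congr point]
  have hsummand : ∀ i ∈ Finset.range (a+b+3), Summable (fun z : ℕ × ℕ =>
      ((i.choose (a+1) : ℕ) : ℂ) / ((((z.2+1:ℕ)) : ℂ) ^ (a+b+3-i)
          * (((z.1+z.2+2:ℕ)) : ℂ) ^ (i+1))
        + ((i.choose (b+1) : ℕ) : ℂ) / ((((z.1+1:ℕ)) : ℂ) ^ (a+b+3-i)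
          * (((z.1+z.2+2:ℕ)) : ℂ) ^ (i+1))) := by
    intro i hi
    rw [Finset.mem_range] at hi
    refine (summable_cT1 _ fun hc => ?_).add (summable_cT2 _ fun hc => ?_)
    · have : ¬ (i < a+1) := fun hlt => hc (Nat.choose_eq_zero_of_lt hlt)
      constructor <;> omega
    · have : ¬ (i < b+1) := fun hlt => hc (Nat.choose_eq_zero_of_lt hlt)
      constructor <;> omega
  rw [Summable.tsum_finsetSum hsummand]
  refine Finset.sum_congr rfl fun i hi => ?_
  rw [Finset.mem_range] at hi
  have hs1 : Summable (fun z : ℕ × ℕ =>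
      ((i.choose (a+1) : ℕ) : ℂ) / ((((z.2+1:ℕ)) : ℂ) ^ (a+b+3-i)
        * (((z.1+z.2+2:ℕ)) : ℂ) ^ (i+1))) := by
    refine summable_cT1 _ fun hc => ?_
    have : ¬ (i < a+1) := fun hlt => hc (Nat.choose_eq_zero_of_lt hlt)
    constructor <;> omega
  have hs2 : Summable (fun z : ℕ × ℕ =>
      ((i.choose (b+1) : ℕ) : ℂ) / ((((z.1+1:ℕ)) : ℂ) ^ (a+b+3-i)
        * (((z.1+z.2+2:ℕ)) : ℂ) ^ (i+1))) := by
    refine summable_cT2 _ fun hc => ?_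
    have : ¬ (i < b+1) := fun hlt => hc (Nat.choose_eq_zero_of_lt hlt)
    constructor <;> omega
  rw [Summable.tsum_add hs1 hs2]
  simp_rw [div_eq_mul_one_div ((_ : ℕ) : ℂ)]
  rw [tsum_mul_left, tsum_mul_left, tsum_T1_eq]
  have ej1 : 1 + i - 1 = i := by omega
  have ej2 : a + b + 4 - (1 + i) = a + b + 3 - i := by omega
  have ej3 : 1 + i = i + 1 := by omega
  rw [ej1, ej2, ej3]
  have : ∑' z : ℕ × ℕ, 1 / ((((z.1+1:ℕ)) : ℂ) ^ (a+b+3-i)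
      * (((z.1+z.2+2:ℕ)) : ℂ) ^ (i+1)) = zeta2 (a+b+3-i) (i+1) := rfl
  rw [this]
  push_cast
  ring
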